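/- For a fixed Pauli P with orbit O(P) = {H^j P H^{-j}} under a Clifford H, and a Pauli stochastic channel S_H with fidelities f(Q), the fidelity of P under m-fold application interleaved with ideal H satisfies: 2^{-n} tr(Q† [φ(H)S_H]^m (P)) = Π_{j=0}^{m-1} f(H^j P H^{-j}) up to sign conventions, and when m is a multiple of |O(P)| this equals (Π_{R ∈ O(P)} f(R))^{m/|O(P)|}, i.e., the geometric orbital mean raised to the power m. -/
import Mathlib


open Matrix Finset

/-- n-qubit Paulis (mod phase), identified with `(Z₂)^{2n}` via `P = Xᵃ Zᵇ`. -/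
abbrev Pauli (n : ℕ) := (Fin n → ZMod 2) × (Fin n → ZMod 2)

/-- The standard symplectic form on `(Z₂)^{2n}`. -/
def symp {n : ℕ} (Q P : Pauli n) : ZMod 2 :=
  ∑ i, (Q.1 i * P.2 i + Q.2 i * P.1 i)

/-- The commutation character: `χ_Q(P) = 1` if `Q` and `P` commute, `-1` otherwise. -/
def chi {n : ℕ} (Q P : Pauli n) : ℤ := (-1) ^ (symp Q P).val

/-- The Pauli operator `Xᵃ Zᵇ` as a `2ⁿ × 2ⁿ` matrix (indexed by bit strings). -/
def PauliOp {n : ℕ} (P : Pauli n) :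
    Matrix (Fin n → ZMod 2) (Fin n → ZMod 2) ℂ :=
  fun s t => if s = t + P.1 then (-1 : ℂ) ^ (∑ i, P.2 i * t i).val else 0

/-- The forward orbit of a Pauli `P` under a permutation (conjugation by a
Clifford); iterating up to the cardinality of the Pauli set covers the orbit. -/
def pOrb {n : ℕ} (hAct : Equiv.Perm (Pauli n)) (P : Pauli n) : Finset (Pauli n) :=
  (Finset.range (Fintype.card (Pauli n))).image (fun j => (⇑hAct)^[j] P)

lemma trace_PauliOp_sq {n : ℕ} (Q : Pauli n) :
    Matrix.trace ((PauliOp Q)ᴴ * PauliOp Q) = (2 : ℂ) ^ n := by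
  have : ∀ t : Fin n → ZMod 2,
      ((PauliOp Q)ᴴ * PauliOp Q) t t = 1 := by
    intro t
    rw [Matrix.mul_apply]
    rw [Finset.sum_eq_single (t + Q.1)]
    · simp [PauliOp, Matrix.conjTranspose_apply, ← mul_pow]
    · intro s _ hs
      simp [PauliOp, Matrix.conjTranspose_apply, hs]
    · simp
  simp only [Matrix.trace, Matrix.diag, this]
  simp [Finset.card_univ]

lemma prod_periodic {M : Type*} [CommMonoid M] (g : ℕ → M) (c : ℕ)
    (hg : ∀ j, g (j + c) = g j) (q : ℕ) :
    ∏ j ∈ Finset.range (q * c), g j = (∏ j ∈ Finset.range c, g j) ^ q := by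
  have hshift : ∀ q j, g (q * c + j) = g j := by
    intro q
    induction q with
    | zero => simp
    | succ q ih2 =>
      intro j
      have h1 : (q + 1) * c + j = q * c + j + c := by ring
      rw [h1, hg, ih2]
  induction q with
  | zero => simp
  | succ q ih =>
    rw [Nat.succ_mul, Finset.prod_range_add, ih, pow_succ]
    congr 1
    exact Finset.prod_congr rfl fun j _ => hshift q j

/-- for a Pauli stochastic channel `S` (acting diagonally on Paulis,
`S(R) = f(R)·R`) interleaved with the ideal Clifford `H` (acting on Pauli labels
by the permutation `hAct`), the fidelity after `m` rounds is the product of the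
fidelities along the orbit:
`2⁻ⁿ tr(Q† [φ(H)S]^m(P)) = Π_{j<m} f(H^j P H^{-j})` with `Q = H^m P H^{-m}`;
and when `|O(P)|` divides `m` this equals `(Π_{R∈O(P)} f(R))^{m/|O(P)|}`. -/
theorem orbit_fidelity_decay {n : ℕ}
    (H : Matrix (Fin n → ZMod 2) (Fin n → ZMod 2) ℂ)
    (S : Matrix (Fin n → ZMod 2) (Fin n → ZMod 2) ℂ →ₗ[ℂ]
      Matrix (Fin n → ZMod 2) (Fin n → ZMod 2) ℂ)
    (f : Pauli n → ℝ) (hAct : Equiv.Perm (Pauli n))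
    (hH : ∀ R : Pauli n, H * PauliOp R * Hᴴ = PauliOp (hAct R))
    (hS : ∀ R : Pauli n, S (PauliOp R) = (f R : ℂ) • PauliOp R)
    (P : Pauli n) (m : ℕ) :
    (((2 : ℂ) ^ n)⁻¹ *
        Matrix.trace ((PauliOp ((⇑hAct)^[m] P))ᴴ *
          ((fun ρ => H * S ρ * Hᴴ)^[m] (PauliOp P)))
      = ∏ j ∈ Finset.range m, ((f ((⇑hAct)^[j] P) : ℂ))) ∧
    ((pOrb hAct P).card ∣ m →
      ∏ j ∈ Finset.range m, f ((⇑hAct)^[j] P)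
        = (∏ R ∈ pOrb hAct P, f R) ^ (m / (pOrb hAct P).card)) := by
  constructor
  · -- iterate formula
    have key : ∀ k : ℕ, (fun ρ => H * S ρ * Hᴴ)^[k] (PauliOp P)
        = (∏ j ∈ Finset.range k, ((f ((⇑hAct)^[j] P) : ℂ))) • PauliOp ((⇑hAct)^[k] P) := by
      intro k
      induction k with
      | zero => simp
      | succ k ih =>
        rw [Function.iterate_succ_apply', ih]
        simp only [_root_.map_smul, hS]
        rw [Matrix.mul_smul, Matrix.smul_mul, Matrix.mul_smul, Matrix.smul_mul, hH,
          smul_smul, Finset.prod_range_succ,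
          Function.iterate_succ_apply']
    rw [key, Matrix.mul_smul, Matrix.trace_smul, trace_PauliOp_sq, smul_eq_mul]
    have h2 : (2 : ℂ) ^ n ≠ 0 := pow_ne_zero _ two_ne_zero
    field_simp
  · -- orbit part
    intro hdvd
    set c := Function.minimalPeriod (⇑hAct) P with hc
    have hper : P ∈ Function.periodicPts (⇑hAct) := by
      refine Function.mk_mem_periodicPts (n := orderOf hAct) ?_ ?_
      · exact orderOf_pos hAct
      · show (⇑hAct)^[orderOf hAct] P = P
        rw [← Equiv.Perm.coe_pow, pow_orderOf_eq_one]; rfl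
    have hcpos : 0 < c := Function.minimalPeriod_pos_of_mem_periodicPts hper
    have hinj : Set.InjOn (fun j => (⇑hAct)^[j] P) (Set.Iio c) :=
      Function.iterate_injOn_Iio_minimalPeriod
    have hmod : ∀ j, (⇑hAct)^[j % c] P = (⇑hAct)^[j] P := fun j =>
      Function.iterate_mod_minimalPeriod_eq
    -- pOrb equals image over range c
    have hcle : c ≤ Fintype.card (Pauli n) := by
      have : ((Finset.range c).image (fun j => (⇑hAct)^[j] P)).card = c := by
        rw [Finset.card_image_of_injOn, Finset.card_range]
        intro a ha b hb hab
        exact hinj (by simpa using ha) (by simpa using hb) hab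
      calc c = _ := this.symm
        _ ≤ Fintype.card (Pauli n) := Finset.card_le_univ _
    have horb : pOrb hAct P = (Finset.range c).image (fun j => (⇑hAct)^[j] P) := by
      apply Finset.Subset.antisymm
      · intro x hx
        simp only [pOrb, Finset.mem_image, Finset.mem_range] at hx ⊢
        obtain ⟨j, _, rfl⟩ := hx
        exact ⟨j % c, Nat.mod_lt _ hcpos, hmod j⟩
      · exact Finset.image_subset_image (by
          intro j hj
          simp only [Finset.mem_range] at hj ⊢
          exact lt_of_lt_of_le hj hcle)
    have hcard : (pOrb hAct P).card = c := by
      rw [horb, Finset.card_image_of_injOn, Finset.card_range]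
      intro a ha b hb hab
      exact hinj (by simpa using ha) (by simpa using hb) hab
    rw [hcard] at hdvd ⊢
    obtain ⟨q, rfl⟩ := hdvd
    have hprod : ∏ R ∈ pOrb hAct P, f R = ∏ j ∈ Finset.range c, f ((⇑hAct)^[j] P) := by
      rw [horb, Finset.prod_image]
      intro a ha b hb hab
      exact hinj (by simpa using ha) (by simpa using hb) hab
    rw [hprod, Nat.mul_div_cancel_left q hcpos, mul_comm c q]
    exact prod_periodic _ c (fun j => congrArg f Function.iterate_add_minimalPeriod_eq) q
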